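/- μ-separation in a cDG reduces to vertex separation in an augmented (moral) graph: B is μ-separated from A given C in D if and only if A∖C and the proxy set Bᵖ are separated by C in the augmentation of the induced subgraph of D(B) on an(A∪Bᵖ∪C), where D(B) adds for each βᵢ∈B a new node βᵢᵖ with edges α→βᵢᵖ whenever α→βᵢ in D. -/

import Mathlib

universe u

/-- A directed correlation graph (cDG): directed edges (loops allowed) and
blunt edges (symmetric, no loops). -/
structure CDG (V : Type u) where
  dir : V → V → Prop
  blunt : V → V → Prop
  blunt_symm : ∀ a b, blunt a b → blunt b a
  blunt_irrefl : ∀ a, ¬ blunt a a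

namespace CDG

variable {V : Type u}

/-- `anc D a b` : `a` is an ancestor of `b` (directed path from `a` to `b`;
every node is its own ancestor). -/
def anc (D : CDG V) (a b : V) : Prop := Relation.ReflTransGen D.dir a b

/-- `an(C)`: the set of ancestors of `C`. -/
def ancSet (D : CDG V) (C : Set V) : Set V := {a | ∃ c ∈ C, D.anc a c}

/-- An edge instance between `a` and `b`, with its orientation. -/
inductive Edge (D : CDG V) : V → V → Type u
  | fwd {a b : V} : D.dir a b → Edge D a b
  | bwd {a b : V} : D.dir b a → Edge D a b
  | bl  {a b : V} : D.blunt a b → Edge D a b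

/-- The edge has a neck (head or stump) at its left endpoint. -/
def Edge.neckLeft {D : CDG V} {a b : V} : D.Edge a b → Prop
  | .fwd _ => False
  | .bwd _ => True
  | .bl _ => True

/-- The edge has a neck (head or stump) at its right endpoint. -/
def Edge.neckRight {D : CDG V} {a b : V} : D.Edge a b → Prop
  | .fwd _ => True
  | .bwd _ => False
  | .bl _ => True

/-- The edge has a head (arrowhead) at its right endpoint. -/
def Edge.headRight {D : CDG V} {a b : V} : D.Edge a b → Prop
  | .fwd _ => True
  | _ => False

/-- The edge is a blunt edge. -/
def Edge.isBlunt {D : CDG V} {a b : V} : D.Edge a b → Prop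
  | .bl _ => True
  | _ => False

/-- A walk from `a` to `b` in `D`. -/
inductive Walk (D : CDG V) : V → V → Type u
  | nil (a : V) : Walk D a a
  | cons {a m c : V} : D.Edge a m → Walk D m c → Walk D a c

namespace Walk

variable {D : CDG V}

def length : ∀ {a b : V}, D.Walk a b → ℕ
  | _, _, .nil _ => 0
  | _, _, .cons _ w => w.length + 1

def support : ∀ {a b : V}, D.Walk a b → List V
  | a, _, .nil _ => [a]
  | a, _, .cons _ w => a :: w.support

/-- The list of nonendpoint (internal) node instances of a walk. -/
def internal : ∀ {a b : V}, D.Walk a b → List V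
  | _, _, .nil _ => []
  | _, _, .cons _ (.nil _) => []
  | _, _, .cons (m := m) _ w => m :: w.internal

/-- The final edge of the walk has a head at the terminal node. -/
def lastHead : ∀ {a b : V}, D.Walk a b → Prop
  | _, _, .nil _ => False
  | _, _, .cons e (.nil _) => e.headRight
  | _, _, .cons _ w => w.lastHead

/-- Every collider on the walk is in `an(C)` and no noncollider is in `C`. -/
def mOpen (C : Set V) : ∀ {a b : V}, D.Walk a b → Prop
  | _, _, .nil _ => True
  | _, _, .cons _ (.nil _) => True
  | _, _, .cons (m := m) e₁ (.cons e₂ w) =>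
      ((e₁.neckRight ∧ e₂.neckLeft) → m ∈ D.ancSet C) ∧
      (¬ (e₁.neckRight ∧ e₂.neckLeft) → m ∉ C) ∧
      mOpen C (Walk.cons e₂ w)

/-- Every nonendpoint node of the walk is a collider. -/
def allColliders : ∀ {a b : V}, D.Walk a b → Prop
  | _, _, .nil _ => True
  | _, _, .cons _ (.nil _) => True
  | _, _, .cons e₁ (.cons e₂ w) =>
      e₁.neckRight ∧ e₂.neckLeft ∧ allColliders (Walk.cons e₂ w)

/-- Every edge of the walk is blunt. -/
def allBlunt : ∀ {a b : V}, D.Walk a b → Prop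
  | _, _, .nil _ => True
  | _, _, .cons e w => e.isBlunt ∧ w.allBlunt

end Walk

/-- There is a μ-connecting walk from `a` to `b` given `C`. -/
def muConn (D : CDG V) (C : Set V) (a b : V) : Prop :=
  a ∉ C ∧ ∃ w : D.Walk a b, w.mOpen C ∧ w.lastHead

/-- `B` is μ-separated from `A` given `C`. -/
def muSep (D : CDG V) (A B C : Set V) : Prop :=
  ∀ a ∈ A, ∀ b ∈ B, ¬ D.muConn C a b

/-- The independence model of `D`: all μ-separation triples. -/
def indep (D : CDG V) : Set (Set V × Set V × Set V) :=
  {p | D.muSep p.1 p.2.1 p.2.2}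

/-- A (nontrivial) collider path. -/
def IsColliderPath {D : CDG V} {a b : V} (w : D.Walk a b) : Prop :=
  0 < w.length ∧ w.support.Nodup ∧ w.allColliders

/-- `a` and `b` are collider connected: some nontrivial walk between them has
every nonendpoint node a collider. -/
def colliderConn (D : CDG V) (a b : V) : Prop :=
  ∃ w : D.Walk a b, 0 < w.length ∧ w.allColliders

/-- A weak inducing path from `a` to `b`: a collider path whose nonendpoint
nodes are all ancestors of `a` or of `b`. -/
def WeakInducing (D : CDG V) (a b : V) : Prop :=
  ∃ w : D.Walk a b, IsColliderPath w ∧ ∀ m ∈ w.internal, D.anc m a ∨ D.anc m b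

/-- A weak inducing path between `a` and `b` (in either direction). -/
def WeakInducingBetween (D : CDG V) (a b : V) : Prop :=
  D.WeakInducing a b ∨ D.WeakInducing b a

end CDG

/-- The graph `D(B)`: `D` together with, for each β∈B, a proxy node βᵖ (the
right copy of β) with edges α → βᵖ exactly when α → β in `D`. -/
def CDG.proxy {V : Type} (D : CDG V) (B : Set V) : CDG (V ⊕ V) where
  dir x y :=
    match x, y with
    | Sum.inl a, Sum.inl b => D.dir a b
    | Sum.inl a, Sum.inr b => b ∈ B ∧ D.dir a b
    | _, _ => False
  blunt x y :=
    match x, y with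
    | Sum.inl a, Sum.inl b => D.blunt a b
    | _, _ => False
  blunt_symm := by
    rintro (a | a) (b | b) h
    · exact D.blunt_symm a b h
    · exact h.elim
    · exact h.elim
    · exact h.elim
  blunt_irrefl := by
    rintro (a | a) h
    · exact D.blunt_irrefl a h
    · exact h.elim

/-- The induced subgraph of `D` on the node set `A`. -/
def CDG.induce {V : Type} (D : CDG V) (A : Set V) : CDG V where
  dir a b := D.dir a b ∧ a ∈ A ∧ b ∈ A
  blunt a b := D.blunt a b ∧ a ∈ A ∧ b ∈ A
  blunt_symm := fun _ _ h => ⟨D.blunt_symm _ _ h.1, h.2.2, h.2.1⟩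
  blunt_irrefl := fun a h => D.blunt_irrefl a h.1

/-- The adjacency relation of the augmented (moral) graph of a cDG: distinct
collider connected nodes are joined. -/
def augAdj {W : Type} (D : CDG W) (x y : W) : Prop :=
  x ≠ y ∧ D.colliderConn x y

/-- Vertex separation in an undirected graph given by an adjacency relation:
`A` and `B` are separated by `C` if every path between them intersects `C`. -/
def udSep {W : Type} (adj : W → W → Prop) (A B C : Set W) : Prop :=
  ¬ ∃ a ∈ A, a ∉ C ∧ ∃ b ∈ B,
      Relation.ReflTransGen (fun x y => adj x y ∧ y ∉ C) a b

/-!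
Every proxy `βᵖ` of `D(B)` is a sink without blunt edges, and μ-connecting walks from `α`
to `β` in `D` correspond to μ-connecting walks from `α` to `βᵖ` in `D(B)`. So it suffices to
prove the criterion for a cDG `G` and a set `B` of such sinks, disjoint from `A` and `C`.

If `a ∈ A` is μ-connected to `b ∈ B` given `C`, every node of the walk is an ancestor of `a`,
of `b` or of `C`, so the walk lies in the subgraph induced on `an(A ∪ B ∪ C)`; cutting it at
its noncolliders, which avoid `C`, gives a path from `a` to `b` in the augmented graph
avoiding `C`.

Conversely, follow such a path edge by edge, keeping an m-open walk from `A \ C` to the current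
node. A collider outside `an(C)` is an ancestor of `A` or of `B`: in the first case restart from
`A` along a reversed directed path, in the second a directed path to `B` already completes a
μ-connecting walk. On reaching `B` the walk ends with an arrowhead, as `B` consists of sinks.
-/

universe v

namespace CDG

section Walks

variable {V : Type u} {G : CDG V} {a b c m : V}

lemma mem_ancSet_of_anc {C : Set V} (h : G.anc a b) (hb : b ∈ G.ancSet C) : a ∈ G.ancSet C :=
  let ⟨c, hc, hbc⟩ := hb
  ⟨c, hc, h.trans hbc⟩

namespace Edge

lemma dir_of_headRight (e : G.Edge a b) (h : e.headRight) : G.dir a b := by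
  cases e with
  | fwd hd => exact hd
  | bwd _ | bl _ => exact h.elim

lemma neckRight_of_headRight (e : G.Edge a b) (h : e.headRight) : e.neckRight := by
  cases e with
  | fwd _ => trivial
  | bwd _ | bl _ => exact h.elim

lemma not_neckLeft_of_headRight (e : G.Edge a b) (h : e.headRight) : ¬ e.neckLeft := by
  cases e with
  | fwd _ => exact id
  | bwd _ | bl _ => exact h.elim

lemma headRight_of_not_neckLeft (e : G.Edge a b) (h : ¬ e.neckLeft) : e.headRight := by
  cases e with
  | fwd _ => trivial
  | bwd _ | bl _ => exact absurd trivial h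

lemma dir_of_not_neckRight (e : G.Edge a b) (h : ¬ e.neckRight) : G.dir b a := by
  cases e with
  | bwd hd => exact hd
  | fwd _ | bl _ => exact absurd trivial h

end Edge

namespace Walk

variable {C : Set V}

def append : ∀ {a b c : V}, G.Walk a b → G.Walk b c → G.Walk a c
  | _, _, _, .nil _, w₂ => w₂
  | _, _, _, .cons e w, w₂ => .cons e (w.append w₂)

def snoc (w : G.Walk a b) (e : G.Edge b c) : G.Walk a c := w.append (.cons e (.nil c))

/-- `False` on the trivial walk, so that the start of a walk never counts as a collider. -/
def lastNeck : ∀ {a b : V}, G.Walk a b → Prop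
  | _, _, .nil _ => False
  | _, _, .cons e (.nil _) => e.neckRight
  | _, _, .cons _ w => w.lastNeck

def firstNeck : ∀ {a b : V}, G.Walk a b → Prop
  | _, _, .nil _ => False
  | _, _, .cons e _ => e.neckLeft

lemma start_mem_support (w : G.Walk a b) : a ∈ w.support := by
  cases w <;> exact List.mem_cons_self

lemma eq_of_length_eq_zero : ∀ {a b : V} (w : G.Walk a b), w.length = 0 → a = b
  | _, _, .nil _, _ => rfl

lemma length_pos_of_ne (w : G.Walk a b) (h : a ≠ b) : 0 < w.length :=
  Nat.pos_of_ne_zero fun h0 => h (w.eq_of_length_eq_zero h0)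

lemma lastNeck_cons_of_not_neckRight (e : G.Edge a m) (w : G.Walk m b) (he : ¬ e.neckRight)
    (hw : ¬ w.lastNeck) : ¬ (Walk.cons e w).lastNeck := by
  cases w with
  | nil => exact he
  | cons => exact hw

lemma lastNeck_snoc : ∀ {a b c : V} (w : G.Walk a b) (e : G.Edge b c),
    (w.snoc e).lastNeck ↔ e.neckRight
  | _, _, _, .nil _, _ => Iff.rfl
  | _, _, _, .cons _ (.nil _), _ => Iff.rfl
  | _, _, _, .cons _ (.cons e' w), e => lastNeck_snoc (.cons e' w) e

lemma lastHead_cons (e : G.Edge a m) {w : G.Walk m b} (h : w.lastHead) :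
    (Walk.cons e w).lastHead := by
  cases w with
  | nil => exact h.elim
  | cons => exact h

lemma allColliders_snoc : ∀ {a b c : V} (w : G.Walk a b) (e : G.Edge b c),
    w.allColliders → (0 < w.length → w.lastNeck ∧ e.neckLeft) → (w.snoc e).allColliders
  | _, _, _, .nil _, _, _, _ => trivial
  | _, _, _, .cons _ (.nil _), _, _, h =>
      ⟨(h (by simp [length])).1, (h (by simp [length])).2, trivial⟩
  | _, _, _, .cons _ (.cons e' w), e, hw, h =>
      ⟨hw.1, hw.2.1, allColliders_snoc (.cons e' w) e hw.2.2 fun _ => h (by simp [length])⟩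

lemma mOpen_tail (e : G.Edge a m) {w : G.Walk m b} (h : (Walk.cons e w).mOpen C) : w.mOpen C := by
  cases w with
  | nil => trivial
  | cons => exact h.2.2

lemma mOpen_cons (e : G.Edge a m) {w : G.Walk m b}
    (hcol : e.neckRight ∧ w.firstNeck → m ∈ G.ancSet C)
    (hnc : ¬ (e.neckRight ∧ w.firstNeck) → m ∉ C) (hw : w.mOpen C) :
    (Walk.cons e w).mOpen C := by
  cases w with
  | nil => trivial
  | cons => exact ⟨hcol, hnc, hw⟩

lemma mOpen_append : ∀ {a b c : V} {w₁ : G.Walk a b} {w₂ : G.Walk b c},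
    w₁.mOpen C → w₂.mOpen C → (w₁.lastNeck ∧ w₂.firstNeck → b ∈ G.ancSet C) →
    (¬ (w₁.lastNeck ∧ w₂.firstNeck) → b ∉ C) → (w₁.append w₂).mOpen C
  | _, _, _, .nil _, _, _, h₂, _, _ => h₂
  | _, _, _, .cons e (.nil _), _, _, h₂, hcol, hnc => mOpen_cons e hcol hnc h₂
  | _, _, _, .cons _ (.cons _ _), _, h₁, h₂, hcol, hnc =>
      ⟨h₁.1, h₁.2.1, mOpen_append h₁.2.2 h₂ hcol hnc⟩

end Walk

end Walks

section Sinks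

variable {V : Type u} {G : CDG V} {a b : V}

def IsSink (G : CDG V) (b : V) : Prop := ∀ x, ¬ G.dir b x ∧ ¬ G.blunt x b

lemma Edge.headRight_of_isSink (hb : G.IsSink b) (e : G.Edge a b) : e.headRight := by
  cases e with
  | fwd _ => trivial
  | bwd h => exact (hb a).1 h
  | bl h => exact (hb a).2 h

lemma Edge.neckLeft_of_isSink (hb : G.IsSink b) (e : G.Edge b a) : e.neckLeft := by
  cases e with
  | bwd _ | bl _ => trivial
  | fwd h => exact ((hb a).1 h).elim

lemma Walk.lastHead_of_isSink (hb : G.IsSink b) :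
    ∀ {a : V} (w : G.Walk a b), 0 < w.length → w.lastHead
  | _, .cons e (.nil _), _ => e.headRight_of_isSink hb
  | _, .cons _ (.cons e' w), _ => lastHead_of_isSink hb (.cons e' w) (by simp [length])

end Sinks

section Hom

variable {V : Type u} {W : Type v} {G : CDG V} {H : CDG W} {a b : V}

structure Hom (G : CDG V) (H : CDG W) where
  toFun : V → W
  map_dir {x y : V} : G.dir x y → H.dir (toFun x) (toFun y)
  map_blunt {x y : V} : G.blunt x y → H.blunt (toFun x) (toFun y)

namespace Hom

variable (φ : G.Hom H)

def mapEdge : G.Edge a b → H.Edge (φ.toFun a) (φ.toFun b)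
  | .fwd h => .fwd (φ.map_dir h)
  | .bwd h => .bwd (φ.map_dir h)
  | .bl h => .bl (φ.map_blunt h)

@[simp] lemma neckLeft_mapEdge (e : G.Edge a b) : (φ.mapEdge e).neckLeft ↔ e.neckLeft := by
  cases e <;> rfl

@[simp] lemma neckRight_mapEdge (e : G.Edge a b) : (φ.mapEdge e).neckRight ↔ e.neckRight := by
  cases e <;> rfl

@[simp] lemma headRight_mapEdge (e : G.Edge a b) : (φ.mapEdge e).headRight ↔ e.headRight := by
  cases e <;> rfl

def mapWalk : ∀ {a b : V}, G.Walk a b → H.Walk (φ.toFun a) (φ.toFun b)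
  | _, _, .nil a => .nil (φ.toFun a)
  | _, _, .cons e w => .cons (φ.mapEdge e) (mapWalk w)

lemma lastHead_mapWalk : ∀ {a b : V} (w : G.Walk a b), w.lastHead → (φ.mapWalk w).lastHead
  | _, _, .cons e (.nil _), h => (φ.headRight_mapEdge e).2 h
  | _, _, .cons _ (.cons e' w), h => lastHead_mapWalk (.cons e' w) h

lemma anc (h : G.anc a b) : H.anc (φ.toFun a) (φ.toFun b) :=
  Relation.ReflTransGen.lift φ.toFun (fun _ _ => φ.map_dir) _ _ h

lemma mem_ancSet {C : Set V} {C' : Set W} (hC : ∀ c ∈ C, φ.toFun c ∈ C')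
    (ha : a ∈ G.ancSet C) : φ.toFun a ∈ H.ancSet C' :=
  let ⟨c, hc, hac⟩ := ha
  ⟨φ.toFun c, hC c hc, φ.anc hac⟩

end Hom

end Hom

section Augmentation

variable {W : Type} {G : CDG W} {A B C T : Set W} {a b m u v x y z : W}

def Edge.toInduce : G.Edge x y → x ∈ T → y ∈ T → (G.induce T).Edge x y
  | .fwd h, hx, hy => .fwd ⟨h, hx, hy⟩
  | .bwd h, hx, hy => .bwd ⟨h, hy, hx⟩
  | .bl h, hx, hy => .bl ⟨h, hx, hy⟩

@[simp] lemma Edge.neckLeft_toInduce (e : G.Edge x y) (hx : x ∈ T) (hy : y ∈ T) :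
    (e.toInduce hx hy).neckLeft ↔ e.neckLeft := by
  cases e <;> rfl

@[simp] lemma Edge.neckRight_toInduce (e : G.Edge x y) (hx : x ∈ T) (hy : y ∈ T) :
    (e.toInduce hx hy).neckRight ↔ e.neckRight := by
  cases e <;> rfl

def induceHom (G : CDG W) (T : Set W) : (G.induce T).Hom G where
  toFun := id
  map_dir h := h.1
  map_blunt h := h.1

lemma Edge.mem_of_induce : (G.induce T).Edge x y → x ∈ T
  | .fwd h | .bl h => h.2.1
  | .bwd h => h.2.2

lemma exists_mOpen_walk_of_anc (hvb : G.anc v b) (hv : v ∉ G.ancSet C) :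
    ∃ F : G.Walk v b, F.mOpen C ∧ ¬ F.firstNeck := by
  induction hvb using Relation.ReflTransGen.head_induction_on with
  | refl => exact ⟨.nil _, trivial, id⟩
  | @head v z hvz _ ih =>
    have hz : z ∉ G.ancSet C := fun hz => hv (mem_ancSet_of_anc (.single hvz) hz)
    obtain ⟨F, hF, hFn⟩ := ih hz
    exact ⟨.cons (.fwd hvz) F,
      Walk.mOpen_cons _ (fun h => absurd h.2 hFn) (fun _ hzC => hz ⟨z, hzC, .refl⟩) hF, id⟩

lemma exists_mOpen_walk_to_of_anc (hva : G.anc v a) (hv : v ∉ G.ancSet C) :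
    ∃ R : G.Walk a v, R.mOpen C ∧ ¬ R.lastNeck := by
  induction hva with
  | refl => exact ⟨.nil _, trivial, id⟩
  | @tail z a hvz hza ih =>
    obtain ⟨R, hR, hRn⟩ := ih
    exact ⟨.cons (.bwd hza) R, Walk.mOpen_cons _ (fun h => h.1.elim)
      (fun _ hzC => hv ⟨z, hzC, hvz⟩) hR, Walk.lastNeck_cons_of_not_neckRight _ _ id hRn⟩

def MuReach (G : CDG W) (A C : Set W) (v : W) (f : Prop) : Prop :=
  ∃ a ∈ A, a ∉ C ∧ ∃ P : G.Walk a v, P.mOpen C ∧ (P.lastNeck ↔ f)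

lemma muReach_self (ha : a ∈ A) (haC : a ∉ C) : G.MuReach A C a False :=
  ⟨a, ha, haC, .nil a, trivial, Iff.rfl⟩

lemma MuReach.snoc {f : Prop} (h : G.MuReach A C v f) (e : G.Edge v u)
    (hcol : f ∧ e.neckLeft → v ∈ G.ancSet C) (hnc : ¬ (f ∧ e.neckLeft) → v ∉ C) :
    G.MuReach A C u e.neckRight := by
  obtain ⟨a, ha, haC, P, hP, hf⟩ := h
  refine ⟨a, ha, haC, P.snoc e, Walk.mOpen_append hP trivial ?_ ?_, P.lastNeck_snoc e⟩
  · exact fun h => hcol ⟨hf.1 h.1, h.2⟩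
  · exact fun h => hnc fun h' => h ⟨hf.2 h'.1, h'.2⟩

lemma muReach_of_anc (ha : a ∈ A) (hva : G.anc v a) (hv : v ∉ G.ancSet C) :
    G.MuReach A C v False :=
  let ⟨R, hR, hRn⟩ := exists_mOpen_walk_to_of_anc hva hv
  ⟨a, ha, fun haC => hv ⟨a, haC, hva⟩, R, hR, iff_false_intro hRn⟩

lemma not_muSep_of_muReach (hAB : Disjoint A B) (hB : ∀ b ∈ B, G.IsSink b) {f : Prop}
    (h : G.MuReach A C v f) (hb : b ∈ B) (F : G.Walk v b) (hF : F.mOpen C)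
    (hFn : ¬ F.firstNeck) (hv : v ∉ C) : ¬ G.muSep A B C := by
  obtain ⟨a, ha, haC, P, hP, -⟩ := h
  refine fun hsep => hsep a ha b hb ⟨haC, P.append F,
    Walk.mOpen_append hP hF (fun h => absurd h.2 hFn) (fun _ => hv), ?_⟩
  exact Walk.lastHead_of_isSink (hB b hb) _
    ((P.append F).length_pos_of_ne (hAB.ne_of_mem ha hb))

lemma muReach_step (hAB : Disjoint A B) (hB : ∀ b ∈ B, G.IsSink b) {f : Prop}
    (h : G.MuReach A C v f) (hvT : v ∈ G.ancSet (A ∪ B ∪ C)) (e : G.Edge v u)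
    (hnc : ¬ (f ∧ e.neckLeft) → v ∉ C) :
    G.MuReach A C u e.neckRight ∨ ¬ G.muSep A B C := by
  by_cases hcol : f ∧ e.neckLeft
  swap
  · exact Or.inl (h.snoc e (fun h => absurd h hcol) hnc)
  by_cases hvC : v ∈ G.ancSet C
  · exact Or.inl (h.snoc e (fun _ => hvC) (absurd hcol))
  have hvC' : v ∉ C := fun h => hvC ⟨v, h, .refl⟩
  obtain ⟨t, (ht | ht) | ht, hvt⟩ := hvT
  · exact Or.inl ((muReach_of_anc ht hvt hvC).snoc e (fun h => h.1.elim) (fun _ => hvC'))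
  · obtain ⟨F, hF, hFn⟩ := exists_mOpen_walk_of_anc hvt hvC
    exact Or.inr (not_muSep_of_muReach hAB hB h ht F hF hFn hvC')
  · exact absurd ⟨t, ht, hvt⟩ hvC

lemma muReach_of_colliderWalk (hAB : Disjoint A B) (hB : ∀ b ∈ B, G.IsSink b) :
    ∀ {v y : W} (p : (G.induce (G.ancSet (A ∪ B ∪ C))).Walk v y) {f : Prop},
    p.allColliders → G.MuReach A C v f → (¬ (f ∧ p.firstNeck) → v ∉ C) →
    (∃ g, G.MuReach A C y g) ∨ ¬ G.muSep A B C
  | _, _, .nil _, f, _, h, _ => Or.inl ⟨f, h⟩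
  | _, _, .cons e p, _, hp, h, hnc => by
    rcases muReach_step hAB hB h e.mem_of_induce ((induceHom G _).mapEdge e)
      fun hn => hnc fun h => hn ⟨h.1, (Hom.neckLeft_mapEdge _ e).2 h.2⟩
      with h' | h'
    · cases p with
      | nil => exact Or.inl ⟨_, h'⟩
      | cons e₂ p =>
        exact muReach_of_colliderWalk hAB hB (.cons e₂ p) hp.2.2 h'
          fun hn => absurd ⟨(Hom.neckRight_mapEdge _ e).2 hp.1, hp.2.1⟩ hn
    · exact Or.inr h'

lemma muReach_of_chain (hAB : Disjoint A B) (hB : ∀ b ∈ B, G.IsSink b) (ha : a ∈ A)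
    (haC : a ∉ C)
    (hchain : Relation.ReflTransGen
      (fun x y => augAdj (G.induce (G.ancSet (A ∪ B ∪ C))) x y ∧ y ∉ C) a y) :
    (y ∉ C ∧ ∃ g, G.MuReach A C y g) ∨ ¬ G.muSep A B C := by
  induction hchain with
  | refl => exact Or.inl ⟨haC, False, muReach_self ha haC⟩
  | tail _ hxy ih =>
    obtain ⟨⟨-, p, -, hp⟩, hyC⟩ := hxy
    rcases ih with ⟨hxC, f, hf⟩ | h
    · exact (muReach_of_colliderWalk hAB hB p hp hf fun _ => hxC).imp (⟨hyC, ·⟩) id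
    · exact Or.inr h

lemma anc_or_mem_ancSet_of_headRight : ∀ {x m y : W} (e : G.Edge x m) (w : G.Walk m y),
    e.headRight → (Walk.cons e w).mOpen C → G.anc x y ∨ x ∈ G.ancSet C
  | _, _, _, e, .nil _, he, _ => Or.inl (.single (e.dir_of_headRight he))
  | _, _, _, e, .cons e₂ w, he, hw => by
    have hd := e.dir_of_headRight he
    by_cases h₂ : e₂.neckLeft
    · exact Or.inr (mem_ancSet_of_anc (.single hd) (hw.1 ⟨e.neckRight_of_headRight he, h₂⟩))
    · rcases anc_or_mem_ancSet_of_headRight e₂ w (e₂.headRight_of_not_neckLeft h₂) hw.2.2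
        with h | h
      · exact Or.inl (.head hd h)
      · exact Or.inr (mem_ancSet_of_anc (.single hd) h)

lemma anc_of_mOpen_cons (e : G.Edge x m) (w : G.Walk m y) (hw : (Walk.cons e w).mOpen C) :
    G.anc m x ∨ G.anc m y ∨ m ∈ G.ancSet C := by
  by_cases he : e.neckRight
  swap
  · exact Or.inl (.single (e.dir_of_not_neckRight he))
  cases w with
  | nil => exact Or.inr (Or.inl .refl)
  | cons e₂ w =>
    by_cases h₂ : e₂.neckLeft
    · exact Or.inr (Or.inr (hw.1 ⟨he, h₂⟩))
    · exact Or.inr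
        (anc_or_mem_ancSet_of_headRight e₂ w (e₂.headRight_of_not_neckLeft h₂) hw.2.2)

lemma anc_of_mem_support : ∀ {x y : W} (w : G.Walk x y), w.mOpen C →
    ∀ v ∈ w.support, G.anc v x ∨ G.anc v y ∨ v ∈ G.ancSet C
  | _, _, .nil _, _, v, hv => Or.inl (by rw [List.mem_singleton.1 hv]; exact .refl)
  | _, _, .cons e w, hw, v, hv => by
    rcases List.mem_cons.1 hv with rfl | hv
    · exact Or.inl .refl
    rcases anc_of_mem_support w (Walk.mOpen_tail e hw) v hv with h | h | h
    · rcases anc_of_mOpen_cons e w hw with h' | h' | h'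
      · exact Or.inl (h.trans h')
      · exact Or.inr (Or.inl (h.trans h'))
      · exact Or.inr (Or.inr (mem_ancSet_of_anc h h'))
    · exact Or.inr (Or.inl h)
    · exact Or.inr (Or.inr h)

lemma chain_of_colliderWalk {H : CDG W} (p : H.Walk z y) (hp : p.allColliders) (hy : y ∉ C) :
    Relation.ReflTransGen (fun x y => augAdj H x y ∧ y ∉ C) z y := by
  by_cases hzy : z = y
  · exact hzy ▸ .refl
  · exact .single ⟨⟨hzy, p, p.length_pos_of_ne hzy, hp⟩, hy⟩

/-- The walk `w` is cut at its noncolliders into collider walks of `G.induce T`; `p` is the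
collider walk accumulated since the last cut. -/
lemma chain_of_mOpen : ∀ {x y : W} (w : G.Walk x y), w.mOpen C →
    (∀ v ∈ w.support, v ∈ T) → y ∉ C → ∀ {z : W} (p : (G.induce T).Walk z x),
    p.allColliders → (0 < p.length → p.lastNeck ∧ w.firstNeck) →
    Relation.ReflTransGen (fun x y => augAdj (G.induce T) x y ∧ y ∉ C) z y
  | _, _, .nil _, _, _, _, _, p, _, hpw => by
    obtain rfl := p.eq_of_length_eq_zero (Nat.eq_zero_of_not_pos fun h => (hpw h).2)
    exact .refl
  | x, _, .cons (m := m) e w, hw, hT, hy, _, p, hp, hpw => by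
    have hT' : ∀ v ∈ w.support, v ∈ T := fun v hv => hT v (List.mem_cons_of_mem _ hv)
    have hp' := p.allColliders_snoc (e.toInduce (hT x List.mem_cons_self)
      (hT' m w.start_mem_support)) hp
      fun h => ⟨(hpw h).1, (Edge.neckLeft_toInduce e _ _).2 (hpw h).2⟩
    cases w with
    | nil => exact chain_of_colliderWalk _ hp' hy
    | cons e₂ w =>
      by_cases hcol : e.neckRight ∧ e₂.neckLeft
      · exact chain_of_mOpen (.cons e₂ w) hw.2.2 hT' hy _ hp'
          fun _ => ⟨by simpa [Walk.lastNeck_snoc] using hcol.1, hcol.2⟩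
      · exact (chain_of_colliderWalk _ hp' (hw.2.1 hcol)).trans
          (chain_of_mOpen (.cons e₂ w) hw.2.2 hT' hy (.nil m) trivial (absurd · (lt_irrefl 0)))

lemma chain_of_muConn (ha : a ∈ A) (hb : b ∈ B) (hbC : b ∉ C) (h : G.muConn C a b) :
    Relation.ReflTransGen
      (fun x y => augAdj (G.induce (G.ancSet (A ∪ B ∪ C))) x y ∧ y ∉ C) a b := by
  obtain ⟨-, w, hw, -⟩ := h
  refine chain_of_mOpen w hw (fun v hv => ?_) hbC (.nil a) trivial (absurd · (lt_irrefl 0))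
  rcases anc_of_mem_support w hw v hv with h | h | ⟨c, hc, h⟩
  · exact ⟨a, Or.inl (Or.inl ha), h⟩
  · exact ⟨b, Or.inl (Or.inr hb), h⟩
  · exact ⟨c, Or.inr hc, h⟩

theorem muSep_iff_udSep_of_isSink (hAB : Disjoint A B) (hBC : Disjoint B C)
    (hB : ∀ b ∈ B, G.IsSink b) :
    G.muSep A B C ↔ udSep (augAdj (G.induce (G.ancSet (A ∪ B ∪ C)))) (A \ C) B C := by
  constructor
  · rintro hsep ⟨a, ⟨ha, haC⟩, -, b, hb, hchain⟩
    rcases muReach_of_chain hAB hB ha haC hchain with ⟨hbC, _, hg⟩ | h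
    · exact not_muSep_of_muReach hAB hB hg hb (.nil b) trivial id hbC hsep
    · exact h hsep
  · intro hud a ha b hb hconn
    exact hud ⟨a, ⟨ha, hconn.1⟩, hconn.1, b, hb,
      chain_of_muConn ha hb (hBC.notMem_of_mem_left hb) hconn⟩

end Augmentation

section Proxy

variable {V : Type} {D : CDG V} {A B C : Set V} {a b : V}

def inlHom (D : CDG V) (B : Set V) : D.Hom (D.proxy B) where
  toFun := Sum.inl
  map_dir h := h
  map_blunt h := h

def foldHom (D : CDG V) (B : Set V) : (D.proxy B).Hom D where
  toFun := Sum.elim id id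
  map_dir := by
    rintro (x | x) (y | y) h
    exacts [h, h.2, h.elim, h.elim]
  map_blunt := by
    rintro (x | x) (y | y) h
    exacts [h, h.elim, h.elim, h.elim]

lemma isSink_proxy_inr (b : V) : (D.proxy B).IsSink (.inr b) :=
  fun x => ⟨id, by cases x <;> exact id⟩

lemma mem_ancSet_proxy_iff {x : V} :
    Sum.inl x ∈ (D.proxy B).ancSet (Sum.inl '' C) ↔ x ∈ D.ancSet C :=
  ⟨(foldHom D B).mem_ancSet (by rintro _ ⟨c, hc, rfl⟩; exact hc),
    (inlHom D B).mem_ancSet fun c hc => ⟨c, hc, rfl⟩⟩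

/-- A proxy node is a sink, so it is a collider wherever it occurs inside a walk; hence folding
the proxies back onto `V` creates no noncollider in `C`. -/
lemma mOpen_mapWalk_foldHom : ∀ {x y : V ⊕ V} (w : (D.proxy B).Walk x y),
    w.mOpen (Sum.inl '' C) → ((foldHom D B).mapWalk w).mOpen C
  | _, _, .nil _, _ => trivial
  | _, _, .cons _ (.nil _), _ => trivial
  | _, _, .cons (m := m) e₁ (.cons e₂ w), hw => by
    refine ⟨fun h => (foldHom D B).mem_ancSet (by rintro _ ⟨c, hc, rfl⟩; exact hc)
      (hw.1 (by simpa using h)), fun h => ?_, mOpen_mapWalk_foldHom (.cons e₂ w) hw.2.2⟩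
    simp only [Hom.neckRight_mapEdge, Hom.neckLeft_mapEdge] at h
    cases m with
    | inl x => exact fun hx => hw.2.1 h ⟨x, hx, rfl⟩
    | inr β =>
      exact absurd ⟨e₁.neckRight_of_headRight (e₁.headRight_of_isSink (isSink_proxy_inr β)),
        e₂.neckLeft_of_isSink (isSink_proxy_inr β)⟩ h

lemma exists_proxy_walk (hb : b ∈ B) : ∀ {x : V} (w : D.Walk x b), w.mOpen C → w.lastHead →
    ∃ w' : (D.proxy B).Walk (.inl x) (.inr b),
      w'.mOpen (Sum.inl '' C) ∧ w'.lastHead ∧ (w'.firstNeck ↔ w.firstNeck)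
  | _, .nil _, _, h => h.elim
  | _, .cons e (.nil _), _, he =>
    ⟨.cons (.fwd (show (D.proxy B).dir (.inl _) (.inr b) from ⟨hb, e.dir_of_headRight he⟩))
      (.nil _), trivial, trivial, iff_of_false id (e.not_neckLeft_of_headRight he)⟩
  | _, .cons e (.cons e₂ w), hw, hlh => by
    obtain ⟨w', hw', hlh', hf⟩ := exists_proxy_walk hb (.cons e₂ w) hw.2.2 hlh
    refine ⟨.cons ((inlHom D B).mapEdge e) w', Walk.mOpen_cons _ (fun h => ?_) (fun h => ?_) hw',
      Walk.lastHead_cons _ hlh', Hom.neckLeft_mapEdge (inlHom D B) e⟩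
    · exact mem_ancSet_proxy_iff.2 (hw.1 ⟨(Hom.neckRight_mapEdge _ e).1 h.1, hf.1 h.2⟩)
    · rintro ⟨c, hc, hcm⟩
      exact hw.2.1 (fun h' => h ⟨(Hom.neckRight_mapEdge _ e).2 h'.1, hf.2 h'.2⟩)
        (Sum.inl_injective hcm ▸ hc)

lemma muConn_proxy_iff (hb : b ∈ B) :
    (D.proxy B).muConn (Sum.inl '' C) (.inl a) (.inr b) ↔ D.muConn C a b := by
  constructor
  · rintro ⟨haC, w, hw, hlh⟩
    exact ⟨fun h => haC ⟨a, h, rfl⟩, (foldHom D B).mapWalk w, mOpen_mapWalk_foldHom w hw,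
      (foldHom D B).lastHead_mapWalk w hlh⟩
  · rintro ⟨haC, w, hw, hlh⟩
    obtain ⟨w', hw', hlh', -⟩ := exists_proxy_walk hb w hw hlh
    exact ⟨fun ⟨c, hc, hca⟩ => haC (Sum.inl_injective hca ▸ hc), w', hw', hlh'⟩

lemma muSep_proxy_iff :
    (D.proxy B).muSep (Sum.inl '' A) (Sum.inr '' B) (Sum.inl '' C) ↔ D.muSep A B C := by
  simp only [muSep, Set.forall_mem_image]
  exact forall₂_congr fun a _ => forall₂_congr fun b hb => not_congr (muConn_proxy_iff hb)

end Proxy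

end CDG

/-- the augmentation criterion for μ-separation in cDGs. -/
theorem stmt14 {V : Type} (D : CDG V) (A B C : Set V) :
    D.muSep A B C ↔
      udSep
        (augAdj ((D.proxy B).induce
          ((D.proxy B).ancSet
            (Sum.inl '' A ∪ Sum.inr '' B ∪ Sum.inl '' C))))
        (Sum.inl '' (A \ C)) (Sum.inr '' B) (Sum.inl '' C) := by
  rw [Set.image_sdiff Sum.inl_injective, ← CDG.muSep_proxy_iff]
  refine CDG.muSep_iff_udSep_of_isSink Set.disjoint_image_inl_image_inr
    Set.disjoint_image_inl_image_inr.symm ?_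
  rintro _ ⟨b, -, rfl⟩
  exact CDG.isSink_proxy_inr b
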